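/- If G = C ∪ P is a chorded cycle, then π(G) = 4. -/

import Mathlib

open scoped Classical

namespace Money

/-- A finite simple directed graph without loops, on a subset of `Fin n`. -/
structure Digraph (n : ℕ) where
  verts : Finset (Fin n)
  edges : Finset (Fin n × Fin n)
  mem_verts : ∀ e ∈ edges, e.1 ∈ verts ∧ e.2 ∈ verts
  no_loops : ∀ e ∈ edges, e.1 ≠ e.2

namespace Digraph

variable {n : ℕ}

/-- There is a directed path (possibly empty) from `i` to `j`. -/
def Reaches (G : Digraph n) : Fin n → Fin n → Prop :=
  Relation.ReflTransGen fun a b => (a, b) ∈ G.edges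

/-- `G` is connected: nonempty, and any vertex reaches any other by a directed path. -/
def Connected (G : Digraph n) : Prop :=
  G.verts.Nonempty ∧ ∀ i ∈ G.verts, ∀ j ∈ G.verts, G.Reaches i j

/-- `T` is (the edge set of) a spanning `i`-tree of `G`: every vertex `j ≠ i`
has a unique directed path in `T` to `i`. -/
def IsSpanTree (G : Digraph n) (i : Fin n) (T : Finset (Fin n × Fin n)) : Prop :=
  T ⊆ G.edges ∧
  (∀ j ∈ G.verts, j ≠ i → ∃! k, (j, k) ∈ T) ∧
  (∀ k, (i, k) ∉ T) ∧
  ∀ j ∈ G.verts, Relation.ReflTransGen (fun a b => (a, b) ∈ T) j i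

/-- The spanning-tree price of vertex `i` at edge weights `b`. -/
noncomputable def price (G : Digraph n) (i : Fin n) (b : Fin n × Fin n → ℝ) : ℝ :=
  ∑ T ∈ G.edges.powerset.filter (fun T => G.IsSpanTree i T), ∏ e ∈ T, b e

/-- The price-ratio function `b ↦ p_i(b)/p_j(b)`. -/
noncomputable def priceRatio (G : Digraph n) (i j : Fin n) (b : Fin n × Fin n → ℝ) : ℝ :=
  G.price i b / G.price j b

/-- An edge coordinate `e` is influential for `f` (as a function on positive
weight vectors on the edges of `G`). -/
def Influential (G : Digraph n) (f : (Fin n × Fin n → ℝ) → ℝ) (e : Fin n × Fin n) : Prop :=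
  ∃ b b' : Fin n × Fin n → ℝ,
    (∀ e' ∈ G.edges, 0 < b e') ∧ (∀ e' ∈ G.edges, 0 < b' e') ∧
    (∀ e', e' ≠ e → b e' = b' e') ∧ f b ≠ f b'

/-- `π_ij(G)`: the number of influential edges of the price-ratio `p_i/p_j`. -/
noncomputable def priceCplxPair (G : Digraph n) (i j : Fin n) : ℕ :=
  (G.edges.filter (fun e => G.Influential (G.priceRatio i j) e)).card

/-- The price complexity `π(G) = max_{i ≠ j} π_ij(G)`. -/
noncomputable def priceComplexity (G : Digraph n) : ℕ :=
  ((G.verts ×ˢ G.verts).filter fun p => p.1 ≠ p.2).sup fun p => G.priceCplxPair p.1 p.2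

/-- There is a directed walk of length `k` from `i` to `j`. -/
def HasWalk (G : Digraph n) (i j : Fin n) (k : ℕ) : Prop :=
  ∃ g : ℕ → Fin n, g 0 = i ∧ g k = j ∧ ∀ t < k, (g t, g (t + 1)) ∈ G.edges

/-- Length of a shortest directed path from `i` to `j`. -/
noncomputable def dist (G : Digraph n) (i j : Fin n) : ℕ := sInf {k | G.HasWalk i j k}

/-- The time complexity `τ(G)`: the diameter of `G`. -/
noncomputable def timeComplexity (G : Digraph n) : ℕ :=
  ((G.verts ×ˢ G.verts).filter fun p => p.1 ≠ p.2).sup fun p => G.dist p.1 p.2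

def outdeg (G : Digraph n) (v : Fin n) : ℕ := (G.edges.filter fun e => e.1 = v).card

def indeg (G : Digraph n) (v : Fin n) : ℕ := (G.edges.filter fun e => e.2 = v).card

/-- A directed cycle: connected, and every vertex has exactly one outgoing
and one incoming edge. -/
def IsCycleGraph (G : Digraph n) : Prop :=
  G.Connected ∧ ∀ v ∈ G.verts, G.outdeg v = 1 ∧ G.indeg v = 1

/-- `P` is a (simple) directed path from `s` to `t`, `s ≠ t`. -/
def IsPathGraph (P : Digraph n) (s t : Fin n) : Prop :=
  s ≠ t ∧ s ∈ P.verts ∧ t ∈ P.verts ∧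
  (∀ v ∈ P.verts, P.Reaches s v ∧ P.Reaches v t) ∧
  (∀ v ∈ P.verts, v ≠ t → P.outdeg v = 1) ∧ P.outdeg t = 0 ∧
  (∀ v ∈ P.verts, v ≠ s → P.indeg v = 1) ∧ P.indeg s = 0

/-- Union of two digraphs. -/
def union (G H : Digraph n) : Digraph n where
  verts := G.verts ∪ H.verts
  edges := G.edges ∪ H.edges
  mem_verts := by
    intro e he
    rcases Finset.mem_union.mp he with h | h
    · exact ⟨Finset.mem_union_left _ (G.mem_verts e h).1,
        Finset.mem_union_left _ (G.mem_verts e h).2⟩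
    · exact ⟨Finset.mem_union_right _ (H.mem_verts e h).1,
        Finset.mem_union_right _ (H.mem_verts e h).2⟩
  no_loops := by
    intro e he
    rcases Finset.mem_union.mp he with h | h
    · exact G.no_loops e h
    · exact H.no_loops e h

/-- A chorded cycle: a directed cycle `C` together with a directed path `P`
joining two distinct vertices of `C`, otherwise disjoint from `C`. -/
def IsChordedCycle (G : Digraph n) : Prop :=
  ∃ (C P : Digraph n) (s t : Fin n),
    C.IsCycleGraph ∧ P.IsPathGraph s t ∧ s ∈ C.verts ∧ t ∈ C.verts ∧
    P.verts ∩ C.verts = {s, t} ∧ Disjoint C.edges P.edges ∧ G = C.union P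

/-- A `k`-rose: `k` directed cycles sharing a single common vertex, otherwise
pairwise disjoint.  A `0`-rose is a single vertex. -/
def IsRose (G : Digraph n) (k : ℕ) : Prop :=
  ∃ (j : Fin n) (C : Fin k → Digraph n),
    (∀ i, (C i).IsCycleGraph) ∧ (∀ i, j ∈ (C i).verts) ∧
    (∀ i i', i ≠ i' → (C i).verts ∩ (C i').verts = {j}) ∧
    G.verts = insert j (Finset.univ.biUnion fun i => (C i).verts) ∧
    G.edges = Finset.univ.biUnion fun i => (C i).edges

/-- `H` is a subgraph of `G` (obtained by deleting some edges and vertices). -/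
def IsSubgraph (H G : Digraph n) : Prop := H.verts ⊆ G.verts ∧ H.edges ⊆ G.edges

/-- The circuit rank `c(G) = e(G) - v(G) + 1`. -/
def circuitRank (G : Digraph n) : ℤ := (G.edges.card : ℤ) - (G.verts.card : ℤ) + 1

/-- The edge `ij` is collapsible. -/
def Collapsible (G : Digraph n) (i j : Fin n) : Prop :=
  (i, j) ∈ G.edges ∧ G.outdeg i = 1 ∧ (j, i) ∉ G.edges ∧
  ∀ k, ¬((k, i) ∈ G.edges ∧ (k, j) ∈ G.edges)

/-- `G` is rigid: no collapsible edges. -/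
def Rigid (G : Digraph n) : Prop := ∀ i j, ¬G.Collapsible i j

/-- `k` covers the ordinary vertex `i` (whose unique outgoing edge is `ij`). -/
def Covers (G : Digraph n) (k i : Fin n) : Prop :=
  G.outdeg i = 1 ∧ ∃ j, (i, j) ∈ G.edges ∧
    (((k, i) ∈ G.edges ∧ (k, j) ∈ G.edges) ∨ (k = j ∧ (j, i) ∈ G.edges))

/-- A star on all of `Fin n`: a center joined to every other vertex by a pair
of oppositely directed edges, and no other edges. -/
def IsStar (G : Digraph n) : Prop :=
  ∃ c : Fin n, G.verts = Finset.univ ∧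
    G.edges = Finset.univ.filter fun e => (e.1 = c ∧ e.2 ≠ c) ∨ (e.2 = c ∧ e.1 ≠ c)

/-- The complete directed graph on all of `Fin n`. -/
def IsComplete (G : Digraph n) : Prop :=
  G.verts = Finset.univ ∧ G.edges = Finset.univ.filter fun e => e.1 ≠ e.2

/-- A chorded triangle: a 3-cycle `u → v → w → u` together with the
bidirected pair between `u` and `w`. -/
def IsChordedTriangle (T : Digraph n) : Prop :=
  ∃ u v w : Fin n, u ≠ v ∧ v ≠ w ∧ u ≠ w ∧
    T.verts = {u, v, w} ∧ T.edges = {(u, w), (w, u), (u, v), (v, w)}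

end Digraph

end Money

open Money Money.Digraph

/-! Every vertex `v ≠ s` of a chorded cycle, `s` the start of the chord, has exactly one
out-edge, and every spanning tree not rooted at `v` contains it. Its weight is therefore a common
factor of `p_i` and `p_j` unless `v ∈ {i, j}`, so only the out-edges of `i`, `j` and `s` can be
influential: at most `1 + 1 + 2`. For the lower bound, a spanning `z`-tree (`z ≠ s`) is `G` minus
the out-edge of `z` and one of the two out-edges of `s`. Choose an out-edge `(s, i)` with `i ≠ t`,
`t` the end of the chord; then `(s, i)` is the only edge into `i`, so there is one spanning
`i`-tree, while both choices give a spanning `t`-tree, because `s` reaches `t` both along the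
cycle and along the chord. In the weights `a`, `b` of the out-edges of `s` and `c`, `d` of those
of `i` and `t` this gives `p_i / p_t = a d / (c (a + b))`, in which all four weights matter. -/

theorem Relation.ReflTransGen.mono_outside {α : Type*} {r r' : α → α → Prop} {z : α}
    {X : Set α} (hX : ∀ x ∈ X, Relation.ReflTransGen r' x z)
    (hr : ∀ a b, r a b → a ≠ z → a ∉ X → r' a b) {v : α} (hv : Relation.ReflTransGen r v z) :
    Relation.ReflTransGen r' v z := by
  induction hv using Relation.ReflTransGen.head_induction_on with
  | refl => exact .refl
  | @head a c hac _ ih =>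
    by_cases haz : a = z
    · exact haz ▸ .refl
    by_cases haX : a ∈ X
    · exact hX a haX
    · exact .head (hr a c hac haz haX) ih

theorem Finset.prod_sdiff_pair {ι M : Type*} [DecidableEq ι] [CommGroupWithZero M]
    {E : Finset ι} {e x : ι} (he : e ∈ E) (hx : x ∈ E) (hex : e ≠ x) {f : ι → M}
    (hf : ∀ a ∈ E, f a ≠ 0) :
    ∏ a ∈ E \ {e, x}, f a = (∏ a ∈ E, f a) / (f e * f x) := by
  rw [eq_div_iff (mul_ne_zero (hf e he) (hf x hx)), ← Finset.prod_pair hex,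
    Finset.prod_sdiff (Finset.insert_subset he (Finset.singleton_subset_iff.mpr hx))]

namespace Money.Digraph

variable {n : ℕ} {G : Digraph n}

noncomputable def spanTrees (G : Digraph n) (z : Fin n) : Finset (Finset (Fin n × Fin n)) :=
  G.edges.powerset.filter (G.IsSpanTree z)

theorem price_eq_sum_spanTrees (z : Fin n) (b : Fin n × Fin n → ℝ) :
    G.price z b = ∑ T ∈ G.spanTrees z, ∏ e ∈ T, b e := rfl

theorem mem_spanTrees {z : Fin n} {T : Finset (Fin n × Fin n)} :
    T ∈ G.spanTrees z ↔ G.IsSpanTree z T := by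
  simp only [spanTrees, Finset.mem_filter, Finset.mem_powerset, and_iff_right_iff_imp]
  exact fun hT => hT.1

theorem priceCplxPair_le_priceComplexity {i j : Fin n} (hi : i ∈ G.verts) (hj : j ∈ G.verts)
    (hij : i ≠ j) : G.priceCplxPair i j ≤ G.priceComplexity := by
  have hmem : (i, j) ∈ (G.verts ×ˢ G.verts).filter fun p => p.1 ≠ p.2 :=
    Finset.mem_filter.mpr ⟨Finset.mem_product.mpr ⟨hi, hj⟩, hij⟩
  have hle := Finset.le_sup (f := fun p => G.priceCplxPair p.1 p.2) hmem
  dsimp only at hle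
  exact hle

theorem priceComplexity_le {k : ℕ} (h : ∀ i j, G.priceCplxPair i j ≤ k) :
    G.priceComplexity ≤ k :=
  Finset.sup_le fun p _ => h p.1 p.2

section Degrees

variable {v : Fin n} {e e' : Fin n × Fin n}

theorem outdeg_eq_zero_of_notMem (hv : v ∉ G.verts) : G.outdeg v = 0 :=
  Finset.card_eq_zero.mpr <| Finset.filter_eq_empty_iff.mpr fun e he h =>
    hv (h ▸ (G.mem_verts e he).1)

theorem indeg_eq_zero_of_notMem (hv : v ∉ G.verts) : G.indeg v = 0 :=
  Finset.card_eq_zero.mpr <| Finset.filter_eq_empty_iff.mpr fun e he h =>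
    hv (h ▸ (G.mem_verts e he).2)

theorem outdeg_union {H : Digraph n} (h : Disjoint G.edges H.edges) (v : Fin n) :
    (G.union H).outdeg v = G.outdeg v + H.outdeg v := by
  simp only [outdeg, union, Finset.filter_union]
  exact Finset.card_union_of_disjoint (Finset.disjoint_filter_filter h)

theorem indeg_union {H : Digraph n} (h : Disjoint G.edges H.edges) (v : Fin n) :
    (G.union H).indeg v = G.indeg v + H.indeg v := by
  simp only [indeg, union, Finset.filter_union]
  exact Finset.card_union_of_disjoint (Finset.disjoint_filter_filter h)

theorem mem_verts_of_outdeg_pos (h : 0 < G.outdeg v) : v ∈ G.verts := by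
  by_contra hv
  rw [outdeg_eq_zero_of_notMem hv] at h
  exact h.false

theorem exists_edge_of_outdeg_pos (h : 0 < G.outdeg v) : ∃ e ∈ G.edges, e.1 = v := by
  obtain ⟨e, he⟩ := Finset.card_pos.mp h
  exact ⟨e, Finset.mem_filter.mp he⟩

theorem eq_of_outdeg_le_one (h : G.outdeg v ≤ 1) (he : e ∈ G.edges) (he' : e' ∈ G.edges)
    (h1 : e.1 = v) (h1' : e'.1 = v) : e = e' :=
  Finset.card_le_one.mp h e (Finset.mem_filter.mpr ⟨he, h1⟩) e'
    (Finset.mem_filter.mpr ⟨he', h1'⟩)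

theorem eq_of_indeg_le_one (h : G.indeg v ≤ 1) (he : e ∈ G.edges) (he' : e' ∈ G.edges)
    (h2 : e.2 = v) (h2' : e'.2 = v) : e = e' :=
  Finset.card_le_one.mp h e (Finset.mem_filter.mpr ⟨he, h2⟩) e'
    (Finset.mem_filter.mpr ⟨he', h2'⟩)

theorem exists_ne_of_outdeg_eq_two (h : G.outdeg v = 2) (e : Fin n × Fin n) :
    ∃ e' ∈ G.edges, e'.1 = v ∧ e' ≠ e := by
  obtain ⟨e', he', hne⟩ := Finset.exists_mem_ne (s := G.edges.filter (·.1 = v)) (by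
    rw [← outdeg, h]; exact one_lt_two) e
  exact ⟨e', (Finset.mem_filter.mp he').1, (Finset.mem_filter.mp he').2, hne⟩

theorem eq_or_eq_of_outdeg_eq_two {x y : Fin n × Fin n} (h : G.outdeg v = 2)
    (hx : x ∈ G.edges) (hy : y ∈ G.edges) (he : e ∈ G.edges) (hx1 : x.1 = v) (hy1 : y.1 = v)
    (he1 : e.1 = v) (hxy : x ≠ y) : e = x ∨ e = y := by
  have hsub : {x, y} ⊆ G.edges.filter (·.1 = v) := by
    simp only [Finset.insert_subset_iff, Finset.singleton_subset_iff, Finset.mem_filter]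
    exact ⟨⟨hx, hx1⟩, hy, hy1⟩
  have hout : G.edges.filter (·.1 = v) = {x, y} :=
    (Finset.eq_of_subset_of_card_le hsub (by rw [Finset.card_pair hxy, ← outdeg, h])).symm
  have hmem : e ∈ G.edges.filter (·.1 = v) := Finset.mem_filter.mpr ⟨he, he1⟩
  simpa [hout] using hmem

end Degrees

section SpanningTrees

variable {z s : Fin n} {T : Finset (Fin n × Fin n)} {e : Fin n × Fin n}

theorem IsSpanTree.notMem_of_fst_eq (hT : G.IsSpanTree z T) (he : e.1 = z) : e ∉ T := by
  obtain ⟨a, c⟩ := e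
  subst he
  exact hT.2.2.1 c

theorem IsSpanTree.mem_of_outdeg_le_one (hT : G.IsSpanTree z T) (he : e ∈ G.edges)
    (hdeg : G.outdeg e.1 ≤ 1) (hz : e.1 ≠ z) : e ∈ T := by
  obtain ⟨k, hk, -⟩ := hT.2.1 e.1 (G.mem_verts e he).1 hz
  rwa [eq_of_outdeg_le_one hdeg he (hT.1 hk) rfl rfl]

theorem price_eq_mul_sum_erase (hT : ∀ T ∈ G.spanTrees z, e ∈ T) (b : Fin n × Fin n → ℝ) :
    G.price z b = b e * ∑ T ∈ G.spanTrees z, ∏ e' ∈ T.erase e, b e' := by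
  rw [price_eq_sum_spanTrees, Finset.mul_sum]
  exact Finset.sum_congr rfl fun T h => (Finset.mul_prod_erase T b (hT T h)).symm

theorem not_influential_priceRatio {i j : Fin n} (he : e ∈ G.edges) (hdeg : G.outdeg e.1 ≤ 1)
    (hi : e.1 ≠ i) (hj : e.1 ≠ j) : ¬G.Influential (G.priceRatio i j) e := by
  rintro ⟨b, b', hb, hb', hbb', hne⟩
  have hmem : ∀ z, e.1 ≠ z → ∀ T ∈ G.spanTrees z, e ∈ T := fun z hz T hT =>
    (mem_spanTrees.mp hT).mem_of_outdeg_le_one he hdeg hz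
  have hrest : ∀ z, ∑ T ∈ G.spanTrees z, ∏ e' ∈ T.erase e, b e' =
      ∑ T ∈ G.spanTrees z, ∏ e' ∈ T.erase e, b' e' := fun z =>
    Finset.sum_congr rfl fun T _ => Finset.prod_congr rfl fun e' he' =>
      hbb' e' (Finset.ne_of_mem_erase he')
  apply hne
  rw [priceRatio, priceRatio, price_eq_mul_sum_erase (hmem i hi),
    price_eq_mul_sum_erase (hmem j hj), price_eq_mul_sum_erase (hmem i hi),
    price_eq_mul_sum_erase (hmem j hj), hrest i, hrest j, mul_div_mul_left _ _ (hb e he).ne',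
    mul_div_mul_left _ _ (hb' e he).ne']

theorem priceCplxPair_le_sum_outdeg {i j : Fin n} (S : Finset (Fin n)) (hi : i ∈ S) (hj : j ∈ S)
    (hS : ∀ v ∉ S, G.outdeg v ≤ 1) : G.priceCplxPair i j ≤ ∑ v ∈ S, G.outdeg v := by
  have hsub : G.edges.filter (G.Influential (G.priceRatio i j)) ⊆ G.edges.filter (·.1 ∈ S) := by
    intro e he
    rw [Finset.mem_filter] at he ⊢
    refine ⟨he.1, by_contra fun hv => ?_⟩
    exact not_influential_priceRatio he.1 (hS _ hv) (fun h => hv (h ▸ hi)) (fun h => hv (h ▸ hj))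
      he.2
  calc G.priceCplxPair i j ≤ (G.edges.filter (·.1 ∈ S)).card := Finset.card_le_card hsub
    _ = ∑ v ∈ S, G.outdeg v := by
      rw [Finset.card_eq_sum_card_fiberwise (s := G.edges.filter (·.1 ∈ S)) (f := Prod.fst)
        (t := S) fun e he => (Finset.mem_filter.mp he).2]
      refine Finset.sum_congr rfl fun v hv => ?_
      rw [Finset.filter_filter, outdeg]
      congr 1
      exact Finset.filter_congr fun e _ => ⟨And.right, fun h => ⟨h ▸ hv, h⟩⟩

theorem priceCplxPair_le_four (hout : ∀ v ∈ G.verts, v ≠ s → G.outdeg v = 1)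
    (hs : G.outdeg s = 2) (i j : Fin n) : G.priceCplxPair i j ≤ 4 := by
  have hle : ∀ v, v ≠ s → G.outdeg v ≤ 1 := by
    intro v hv
    by_cases hvG : v ∈ G.verts
    · exact (hout v hvG hv).le
    · rw [outdeg_eq_zero_of_notMem hvG]
      exact zero_le_one
  have hrest : ∑ v ∈ ({s, i, j} : Finset (Fin n)).erase s, G.outdeg v ≤ 2 :=
    calc _ ≤ (({s, i, j} : Finset (Fin n)).erase s).card • 1 :=
          Finset.sum_le_card_nsmul _ _ _ fun v hv => hle v (Finset.ne_of_mem_erase hv)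
      _ ≤ ({i, j} : Finset (Fin n)).card := by
          rw [smul_eq_mul, mul_one]
          exact Finset.card_le_card (Finset.erase_insert_subset _ _)
      _ ≤ 2 := Finset.card_le_two
  calc G.priceCplxPair i j ≤ ∑ v ∈ {s, i, j}, G.outdeg v :=
        priceCplxPair_le_sum_outdeg _ (by simp) (by simp) fun v hv => hle v (by simp_all)
    _ = G.outdeg s + ∑ v ∈ ({s, i, j} : Finset (Fin n)).erase s, G.outdeg v :=
        (Finset.add_sum_erase _ _ (Finset.mem_insert_self _ _)).symm
    _ ≤ 4 := by omega

end SpanningTrees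

section OneBranchVertex

variable {s z : Fin n} {e : Fin n × Fin n}

def ReachesAvoiding (G : Digraph n) (x : Fin n × Fin n) : Fin n → Fin n → Prop :=
  Relation.ReflTransGen fun a b => (a, b) ∈ G.edges ∧ (a, b) ≠ x

theorem exists_unique_out_edge_ne (hout : ∀ v ∈ G.verts, v ≠ s → G.outdeg v = 1)
    (hs : G.outdeg s = 2) {j : Fin n} (hj : j ∈ G.verts) {x : Fin n × Fin n} (hx : x ∈ G.edges)
    (hx1 : x.1 = s) :
    ∃ y ∈ G.edges, y.1 = j ∧ y ≠ x ∧ ∀ f ∈ G.edges, f.1 = j → f ≠ x → f = y := by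
  by_cases hjs : j = s
  · subst hjs
    obtain ⟨y, hy, hy1, hyx⟩ := exists_ne_of_outdeg_eq_two hs x
    exact ⟨y, hy, hy1, hyx, fun f hf hf1 hfx =>
      (eq_or_eq_of_outdeg_eq_two hs hx hy hf hx1 hy1 hf1 hyx.symm).resolve_left hfx⟩
  · have hj1 := hout j hj hjs
    obtain ⟨y, hy, hy1⟩ := exists_edge_of_outdeg_pos (hj1 ▸ one_pos)
    exact ⟨y, hy, hy1, fun h => hjs (hy1 ▸ h ▸ hx1),
      fun f hf hf1 _ => eq_of_outdeg_le_one hj1.le hf hy hf1 hy1⟩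

theorem IsSpanTree.exists_eq_sdiff (hout : ∀ v ∈ G.verts, v ≠ s → G.outdeg v = 1)
    (hs : G.outdeg s = 2) {T : Finset (Fin n × Fin n)} (hT : G.IsSpanTree z T) (hzs : z ≠ s)
    (he : e ∈ G.edges) (he1 : e.1 = z) : ∃ x ∈ G.edges, x.1 = s ∧ T = G.edges \ {e, x} := by
  obtain ⟨k, hk, hku⟩ := hT.2.1 s (mem_verts_of_outdeg_pos (hs ▸ two_pos)) hzs.symm
  obtain ⟨x, hx, hx1, hxk⟩ := exists_ne_of_outdeg_eq_two hs (s, k)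
  have hxT : x ∉ T := by
    obtain ⟨a, c⟩ := x
    simp only at hx1
    subst hx1
    exact fun hxT => hxk (by rw [hku c hxT])
  refine ⟨x, hx, hx1, Finset.ext fun f => ?_⟩
  simp only [Finset.mem_sdiff, Finset.mem_insert, Finset.mem_singleton, not_or]
  refine ⟨fun hf => ⟨hT.1 hf, fun h => hT.notMem_of_fst_eq he1 (h ▸ hf),
    fun h => hxT (h ▸ hf)⟩, fun ⟨hfE, hfe, hfx⟩ => ?_⟩
  have hz : z ∈ G.verts := he1 ▸ (G.mem_verts e he).1
  by_cases hfz : f.1 = z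
  · exact absurd (eq_of_outdeg_le_one (hout z hz hzs).le hfE he hfz he1) hfe
  by_cases hfs : f.1 = s
  · rcases eq_or_eq_of_outdeg_eq_two hs hx (hT.1 hk) hfE hx1 rfl hfs hxk with h | h
    · exact absurd h hfx
    · exact h ▸ hk
  · exact hT.mem_of_outdeg_le_one hfE (hout _ (G.mem_verts f hfE).1 hfs).le hfz

/-- A walk in `G` from any vertex to `z` stays inside the tree until it reaches `z` or `s`. -/
theorem isSpanTree_sdiff (hconn : G.Connected) (hout : ∀ v ∈ G.verts, v ≠ s → G.outdeg v = 1)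
    (hs : G.outdeg s = 2) (hzs : z ≠ s) (he : e ∈ G.edges) (he1 : e.1 = z)
    {x : Fin n × Fin n} (hx : x ∈ G.edges) (hx1 : x.1 = s)
    (hreach : Relation.ReflTransGen (fun a b => (a, b) ∈ G.edges \ {e, x}) s z) :
    G.IsSpanTree z (G.edges \ {e, x}) := by
  have hz : z ∈ G.verts := he1 ▸ (G.mem_verts e he).1
  have hmem : ∀ f ∈ G.edges, f.1 ≠ z → f ≠ x → f ∈ G.edges \ {e, x} := fun f hf hfz hfx => by
    simp only [Finset.mem_sdiff, Finset.mem_insert, Finset.mem_singleton, not_or]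
    exact ⟨hf, fun h => hfz (h ▸ he1), hfx⟩
  refine ⟨Finset.sdiff_subset, fun j hj hjz => ?_, fun k hk => ?_, fun v hv => ?_⟩
  · obtain ⟨⟨a, c⟩, hy, rfl, hyx, hyu⟩ := exists_unique_out_edge_ne hout hs hj hx hx1
    refine ⟨c, hmem _ hy hjz hyx, fun k hk => ?_⟩
    simp only [Finset.mem_sdiff, Finset.mem_insert, Finset.mem_singleton, not_or] at hk
    exact congrArg Prod.snd (hyu _ hk.1 rfl hk.2.2)
  · simp only [Finset.mem_sdiff, Finset.mem_insert, Finset.mem_singleton, not_or] at hk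
    exact hk.2.1 (eq_of_outdeg_le_one (hout z hz hzs).le hk.1 he rfl he1)
  · refine (hconn.2 v hv z hz).mono_outside (X := {s}) (fun _ h => h ▸ hreach) ?_
    exact fun a b hab haz has => hmem (a, b) hab haz fun h =>
      has (by rw [Set.mem_singleton_iff, ← hx1, ← h])

theorem spanTrees_eq_singleton (hconn : G.Connected)
    (hout : ∀ v ∈ G.verts, v ≠ s → G.outdeg v = 1) (hs : G.outdeg s = 2) {i : Fin n}
    (hsi : (s, i) ∈ G.edges) (hin : G.indeg i = 1) {y : Fin n × Fin n} (hy : y ∈ G.edges)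
    (hy1 : y.1 = s) (hyi : y ≠ (s, i)) (he : e ∈ G.edges) (he1 : e.1 = i) :
    G.spanTrees i = {G.edges \ {e, y}} := by
  have his : i ≠ s := fun h => G.no_loops _ hsi h.symm
  ext T
  rw [mem_spanTrees, Finset.mem_singleton]
  refine ⟨fun hT => ?_, fun hT => hT ▸ isSpanTree_sdiff hconn hout hs his he he1 hy hy1 ?_⟩
  · obtain ⟨x, hx, hx1, rfl⟩ := hT.exists_eq_sdiff hout hs his he he1
    rcases eq_or_eq_of_outdeg_eq_two hs hsi hy hx rfl hy1 hx1 hyi.symm with rfl | rfl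
    · -- `(s, i)` is the only edge into `i`, so nothing reaches `i` once it is removed
      exfalso
      have hsG := mem_verts_of_outdeg_pos (hs ▸ two_pos)
      rcases (hT.2.2.2 s hsG).cases_tail with h | ⟨c, -, hc⟩
      · exact his h
      · rw [Finset.mem_sdiff] at hc
        exact hc.2 (by simp [eq_of_indeg_le_one hin.le hc.1 hsi rfl rfl])
    · rfl
  · refine .single ?_
    simp only [Finset.mem_sdiff, Finset.mem_insert, Finset.mem_singleton, not_or]
    exact ⟨hsi, fun h => his (by rw [← he1, ← h]), hyi.symm⟩

theorem spanTrees_eq_pair (hconn : G.Connected) (hout : ∀ v ∈ G.verts, v ≠ s → G.outdeg v = 1)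
    (hs : G.outdeg s = 2) {t : Fin n} (hts : t ≠ s) {x y : Fin n × Fin n} (hx : x ∈ G.edges)
    (hy : y ∈ G.edges) (hx1 : x.1 = s) (hy1 : y.1 = s) (hxy : x ≠ y) (he : e ∈ G.edges)
    (he1 : e.1 = t) (hbypass : ∀ f ∈ G.edges, f.1 = s → G.ReachesAvoiding f s t) :
    G.spanTrees t = {G.edges \ {e, x}, G.edges \ {e, y}} := by
  have hspan : ∀ f ∈ G.edges, f.1 = s → G.IsSpanTree t (G.edges \ {e, f}) := by
    refine fun f hf hf1 => isSpanTree_sdiff hconn hout hs hts he he1 hf hf1 ?_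
    refine (hbypass f hf hf1).mono_outside (X := ∅) (fun _ h => h.elim) ?_
    rintro a b ⟨hab, hne⟩ hat -
    simp only [Finset.mem_sdiff, Finset.mem_insert, Finset.mem_singleton, not_or]
    exact ⟨hab, fun h => hat (by rw [← he1, ← h]), hne⟩
  ext T
  rw [mem_spanTrees, Finset.mem_insert, Finset.mem_singleton]
  refine ⟨fun hT => ?_, ?_⟩
  · obtain ⟨f, hf, hf1, rfl⟩ := hT.exists_eq_sdiff hout hs hts he he1
    rcases eq_or_eq_of_outdeg_eq_two hs hx hy hf hx1 hy1 hf1 hxy with rfl | rfl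
    · exact Or.inl rfl
    · exact Or.inr rfl
  · rintro (rfl | rfl)
    · exact hspan x hx hx1
    · exact hspan y hy hy1

theorem priceRatio_eq (hconn : G.Connected) (hout : ∀ v ∈ G.verts, v ≠ s → G.outdeg v = 1)
    (hs : G.outdeg s = 2) {i t : Fin n} (hsi : (s, i) ∈ G.edges) (hin : G.indeg i = 1)
    (hts : t ≠ s) {y ei et : Fin n × Fin n} (hy : y ∈ G.edges) (hy1 : y.1 = s) (hyi : y ≠ (s, i))
    (hei : ei ∈ G.edges) (hei1 : ei.1 = i) (het : et ∈ G.edges) (het1 : et.1 = t)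
    (hbypass : ∀ f ∈ G.edges, f.1 = s → G.ReachesAvoiding f s t)
    {b : Fin n × Fin n → ℝ} (hb : ∀ f ∈ G.edges, 0 < b f) :
    G.priceRatio i t b = b (s, i) * b et / (b ei * (b (s, i) + b y)) := by
  have his : i ≠ s := fun h => G.no_loops _ hsi h.symm
  have hb0 : ∀ f ∈ G.edges, b f ≠ 0 := fun f hf => (hb f hf).ne'
  have hei_y : ei ≠ y := ne_of_apply_ne Prod.fst (by rw [hei1, hy1]; exact his)
  have het_si : et ≠ (s, i) := ne_of_apply_ne Prod.fst (by rw [het1]; exact hts)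
  have het_y : et ≠ y := ne_of_apply_ne Prod.fst (by rw [het1, hy1]; exact hts)
  have htrees_ne : G.edges \ {et, (s, i)} ≠ G.edges \ {et, y} := fun h => by
    have hyT : y ∈ G.edges \ {et, (s, i)} := by simp [hy, het_y.symm, hyi]
    simp [h] at hyT
  rw [priceRatio, price_eq_sum_spanTrees, price_eq_sum_spanTrees,
    spanTrees_eq_singleton hconn hout hs hsi hin hy hy1 hyi hei hei1,
    spanTrees_eq_pair hconn hout hs hts hsi hy rfl hy1 hyi.symm het het1 hbypass,
    Finset.sum_singleton, Finset.sum_pair htrees_ne, Finset.prod_sdiff_pair hei hy hei_y hb0,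
    Finset.prod_sdiff_pair het hsi het_si hb0, Finset.prod_sdiff_pair het hy het_y hb0]
  have := hb0 _ hsi
  have := hb0 _ hy
  have := hb0 _ hei
  have := hb0 _ het
  have := (Finset.prod_pos hb).ne'
  field_simp
  ring

/-- Each weight of `a * d / (c * (a + b))` changes its value when raised from `1` to `2`. -/
theorem four_le_priceCplxPair_of_priceRatio_eq {i j : Fin n} {ea eb ec ed : Fin n × Fin n}
    (ha : ea ∈ G.edges) (hb : eb ∈ G.edges) (hc : ec ∈ G.edges) (hd : ed ∈ G.edges)
    (hab : ea ≠ eb) (hac : ea ≠ ec) (had : ea ≠ ed) (hbc : eb ≠ ec) (hbd : eb ≠ ed)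
    (hcd : ec ≠ ed)
    (hratio : ∀ w : Fin n × Fin n → ℝ, (∀ f ∈ G.edges, 0 < w f) →
      G.priceRatio i j w = w ea * w ed / (w ec * (w ea + w eb))) :
    4 ≤ G.priceCplxPair i j := by
  have hinf : ∀ f ∈ ({ea, eb, ec, ed} : Finset (Fin n × Fin n)),
      G.Influential (G.priceRatio i j) f := by
    intro f hf
    have hpos : ∀ g ∈ G.edges, 0 < Function.update (fun _ => (1 : ℝ)) f 2 g := fun g _ => by
      rw [Function.update_apply]
      split_ifs <;> norm_num
    refine ⟨fun _ => 1, Function.update (fun _ => 1) f 2, fun _ _ => one_pos, hpos,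
      fun g hg => by rw [Function.update_of_ne hg], ?_⟩
    rw [hratio _ fun _ _ => one_pos, hratio _ hpos]
    simp only [Finset.mem_insert, Finset.mem_singleton] at hf
    rcases hf with rfl | rfl | rfl | rfl <;>
      simp [hab, hac, had, hbc, hbd, hcd, hab.symm, hac.symm, had.symm,
        hbc.symm, hbd.symm, hcd.symm] <;> norm_num
  have hmem : ∀ f ∈ ({ea, eb, ec, ed} : Finset (Fin n × Fin n)), f ∈ G.edges := by
    simp only [Finset.mem_insert, Finset.mem_singleton]
    rintro f (rfl | rfl | rfl | rfl) <;> assumption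
  calc 4 = ({ea, eb, ec, ed} : Finset (Fin n × Fin n)).card := by
        simp [hab, hac, had, hbc, hbd, hcd]
    _ ≤ G.priceCplxPair i j :=
        Finset.card_le_card fun f hf => Finset.mem_filter.mpr ⟨hmem f hf, hinf f hf⟩

theorem four_le_priceCplxPair (hconn : G.Connected)
    (hout : ∀ v ∈ G.verts, v ≠ s → G.outdeg v = 1) (hs : G.outdeg s = 2) {i t : Fin n}
    (hsi : (s, i) ∈ G.edges) (hin : G.indeg i = 1) (hit : i ≠ t) (ht : t ∈ G.verts)
    (hts : t ≠ s) (hbypass : ∀ f ∈ G.edges, f.1 = s → G.ReachesAvoiding f s t) :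
    4 ≤ G.priceCplxPair i t := by
  have his : i ≠ s := fun h => G.no_loops _ hsi h.symm
  obtain ⟨y, hy, hy1, hyi⟩ := exists_ne_of_outdeg_eq_two hs (s, i)
  obtain ⟨ei, hei, hei1⟩ :=
    exists_edge_of_outdeg_pos ((hout i (G.mem_verts _ hsi).2 his).symm ▸ one_pos)
  obtain ⟨et, het, het1⟩ := exists_edge_of_outdeg_pos ((hout t ht hts).symm ▸ one_pos)
  have hsrc : ∀ {f g : Fin n × Fin n}, f.1 ≠ g.1 → f ≠ g := ne_of_apply_ne Prod.fst
  refine four_le_priceCplxPair_of_priceRatio_eq hsi hy hei het hyi.symm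
    (hsrc (by rw [hei1]; exact his.symm)) (hsrc (by rw [het1]; exact hts.symm))
    (hsrc (by rw [hy1, hei1]; exact his.symm)) (hsrc (by rw [hy1, het1]; exact hts.symm))
    (hsrc (by rw [hei1, het1]; exact hit)) fun w hw => ?_
  exact priceRatio_eq hconn hout hs hsi hin hts hy hy1 hyi hei hei1 het het1 hbypass hw

end OneBranchVertex

section ChordedCycle

variable {C P : Digraph n} {s t : Fin n}

theorem eq_or_eq_of_mem_verts (hint : P.verts ∩ C.verts = {s, t}) {v : Fin n}
    (hvP : v ∈ P.verts) (hvC : v ∈ C.verts) : v = s ∨ v = t := by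
  have hv := Finset.mem_inter.mpr ⟨hvP, hvC⟩
  rw [hint] at hv
  simpa using hv

theorem union_outdeg_eq_two (hC : C.IsCycleGraph) (hP : P.IsPathGraph s t) (hsC : s ∈ C.verts)
    (hdisj : Disjoint C.edges P.edges) : (C.union P).outdeg s = 2 := by
  rw [outdeg_union hdisj, (hC.2 s hsC).1, hP.2.2.2.2.1 s hP.2.1 hP.1]

theorem union_outdeg_eq_one (hC : C.IsCycleGraph) (hP : P.IsPathGraph s t) (htC : t ∈ C.verts)
    (hint : P.verts ∩ C.verts = {s, t}) (hdisj : Disjoint C.edges P.edges) :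
    ∀ v ∈ (C.union P).verts, v ≠ s → (C.union P).outdeg v = 1 := by
  intro v hv hvs
  rw [outdeg_union hdisj]
  by_cases hvC : v ∈ C.verts
  · rw [(hC.2 v hvC).1]
    by_cases hvP : v ∈ P.verts
    · rcases eq_or_eq_of_mem_verts hint hvP hvC with rfl | rfl
      · exact absurd rfl hvs
      · rw [hP.2.2.2.2.2.1]
    · rw [outdeg_eq_zero_of_notMem hvP]
  · have hvP : v ∈ P.verts := (Finset.mem_union.mp hv).resolve_left hvC
    rw [outdeg_eq_zero_of_notMem hvC, hP.2.2.2.2.1 v hvP fun h => hvC (h ▸ htC)]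

theorem union_indeg_eq_one (hC : C.IsCycleGraph) (hP : P.IsPathGraph s t)
    (hint : P.verts ∩ C.verts = {s, t}) (hdisj : Disjoint C.edges P.edges) {w : Fin n}
    (hsw : (s, w) ∈ (C.union P).edges) (hwt : w ≠ t) : (C.union P).indeg w = 1 := by
  have hws : w ≠ s := fun h => (C.union P).no_loops _ hsw h.symm
  rw [indeg_union hdisj]
  rcases Finset.mem_union.mp hsw with hswC | hswP
  · have hwC := (C.mem_verts _ hswC).2
    have hwP : w ∉ P.verts := fun h => (eq_or_eq_of_mem_verts hint h hwC).elim hws hwt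
    rw [(hC.2 w hwC).2, indeg_eq_zero_of_notMem hwP]
  · have hwP := (P.mem_verts _ hswP).2
    have hwC : w ∉ C.verts := fun h => (eq_or_eq_of_mem_verts hint hwP h).elim hws hwt
    rw [indeg_eq_zero_of_notMem hwC, hP.2.2.2.2.2.2.1 w hwP hws]

theorem connected_union (hC : C.IsCycleGraph) (hP : P.IsPathGraph s t) (hsC : s ∈ C.verts)
    (htC : t ∈ C.verts) : (C.union P).Connected := by
  have hCG : ∀ {a b}, C.Reaches a b → (C.union P).Reaches a b :=
    Relation.ReflTransGen.mono (fun _ _ => Finset.mem_union_left _) _ _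
  have hPG : ∀ {a b}, P.Reaches a b → (C.union P).Reaches a b :=
    Relation.ReflTransGen.mono (fun _ _ => Finset.mem_union_right _) _ _
  have hto : ∀ v ∈ (C.union P).verts, (C.union P).Reaches v t := fun v hv =>
    (Finset.mem_union.mp hv).elim (fun hv => hCG (hC.1.2 v hv t htC))
      fun hv => hPG (hP.2.2.2.1 v hv).2
  have hfrom : ∀ w ∈ (C.union P).verts, (C.union P).Reaches t w := fun w hw =>
    (Finset.mem_union.mp hw).elim (fun hw => hCG (hC.1.2 t htC w hw))
      fun hw => (hCG (hC.1.2 t htC s hsC)).trans (hPG (hP.2.2.2.1 w hw).1)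
  exact ⟨⟨s, Finset.mem_union_left _ hsC⟩, fun v hv w hw => (hto v hv).trans (hfrom w hw)⟩

/-- Removing an edge of `C` leaves the path `P` from `s` to `t`, removing one of `P` leaves `C`. -/
theorem union_reachesAvoiding (hC : C.IsCycleGraph) (hP : P.IsPathGraph s t) (hsC : s ∈ C.verts)
    (htC : t ∈ C.verts) (hdisj : Disjoint C.edges P.edges) :
    ∀ f ∈ (C.union P).edges, (C.union P).ReachesAvoiding f s t := by
  intro f hf
  rcases Finset.mem_union.mp hf with hfC | hfP
  · refine Relation.ReflTransGen.mono (fun a b hab => ?_) _ _ (hP.2.2.2.1 t hP.2.2.1).1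
    exact ⟨Finset.mem_union_right _ hab, fun h => Finset.disjoint_left.mp hdisj hfC (h ▸ hab)⟩
  · refine Relation.ReflTransGen.mono (fun a b hab => ?_) _ _ (hC.1.2 s hsC t htC)
    exact ⟨Finset.mem_union_left _ hab, fun h => Finset.disjoint_left.mp hdisj hab (h ▸ hfP)⟩

end ChordedCycle

end Money.Digraph

/-- a chorded cycle has `π(G) = 4`. -/
theorem stmt6 {n : ℕ} (G : Money.Digraph n) (hG : G.IsChordedCycle) :
    G.priceComplexity = 4 := by
  obtain ⟨C, P, s, t, hC, hP, hsC, htC, hint, hdisj, rfl⟩ := hG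
  have hout := union_outdeg_eq_one hC hP htC hint hdisj
  have hs := union_outdeg_eq_two hC hP hsC hdisj
  obtain ⟨⟨s', i⟩, hsi, hs', hit⟩ := exists_ne_of_outdeg_eq_two hs (s, t)
  obtain rfl : s' = s := hs'
  replace hit : i ≠ t := fun h => hit (by rw [h])
  refine le_antisymm (priceComplexity_le (priceCplxPair_le_four hout hs)) ?_
  calc 4 ≤ (C.union P).priceCplxPair i t :=
        four_le_priceCplxPair (connected_union hC hP hsC htC) hout hs hsi
          (union_indeg_eq_one hC hP hint hdisj hsi hit) hit (Finset.mem_union_left _ htC) hP.1.symm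
          fun f hf _ => union_reachesAvoiding hC hP hsC htC hdisj f hf
    _ ≤ _ := priceCplxPair_le_priceComplexity ((C.union P).mem_verts _ hsi).2
        (Finset.mem_union_left _ htC) hit
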